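/- Let 𝒜 be a weak deterministic Büchi automaton over the alphabet Σ ∪ {⋆}, let d ≥ 1, 0 ≤ f < d, z ∈ Σ, let q be a state of 𝒜, let 𝐚 = (a₀,…,a_{d−1}) ∈ Σ^d, and let 𝐰 be an infinite word over Σ^□_f ∪ {⋆}. Then the automaton par(𝒜)^{z@f} started in state δ(q, a₀a₁⋯a_{d−1}) accepts 𝐰 if and only if the automaton 𝒜^{seq z} started in state (δ(q, a₀a₁⋯a_f), 0) accepts the word a_{f+1}⋯a_{d−1}·seq(𝐰), where seq(𝐰) is the word over Σ ∪ {□,⋆} obtained by replacing each d-tuple letter of 𝐰 by the sequence of its d components and keeping ⋆. -/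

import Mathlib

/-- A deterministic Büchi automaton over alphabet `A` with states `Q`. -/
structure DBA (A : Type) (Q : Type) where
  delta : Q → A → Q
  init : Q
  F : Set Q

namespace DBA

variable {A Q : Type}

/-- The transition function extended to finite words. -/
def deltaStar (M : DBA A Q) : Q → List A → Q
  | q, [] => q
  | q, a :: u => deltaStar M (M.delta q a) u

/-- The run of `M` on the infinite word `w`. -/
def run (M : DBA A Q) (w : ℕ → A) : ℕ → Q
  | 0 => M.init
  | n + 1 => M.delta (run M w n) (w n)

/-- `M` accepts `w` if some accepting state occurs infinitely often in the run. -/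
def Accepts (M : DBA A Q) (w : ℕ → A) : Prop :=
  ∃ q ∈ M.F, ∀ N : ℕ, ∃ n, N ≤ n ∧ run M w n = q

/-- The ω-language of `M`. -/
def Lang (M : DBA A Q) : Set (ℕ → A) := {w | M.Accepts w}

/-- `M` with initial state changed to `q`. -/
def start (M : DBA A Q) (q : Q) : DBA A Q := { M with init := q }

/-- `q'` is accessible from `q` (by a nonempty word). -/
def Reach (M : DBA A Q) (q q' : Q) : Prop :=
  ∃ u : List A, u ≠ [] ∧ deltaStar M q u = q'

/-- `M` is weak: `F` is a union of strongly connected components. -/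
def Weak (M : DBA A Q) : Prop :=
  ∀ q ∈ M.F, ∀ q', M.Reach q q' → M.Reach q' q → q' ∈ M.F

/-- `M` is minimal: distinct states recognize distinct languages. -/
def Minimal (M : DBA A Q) : Prop :=
  ∀ q q' : Q, q ≠ q' → (M.start q).Lang ≠ (M.start q').Lang

end DBA

/-- Concatenation of a finite word and an infinite word. -/
def cat {A : Type} (u : List A) (w : ℕ → A) : ℕ → A :=
  fun n => if h : n < u.length then u.get ⟨n, h⟩ else w (n - u.length)

/-- The value `⟨v⟩ = Σ_{i<|v|} v[i]·b^(|v|-1-i)` of a finite digit word. -/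
noncomputable def natVal (b : ℕ) (v : List (Fin b)) : ℝ :=
  ∑ i : Fin v.length, ((v.get i : ℕ) : ℝ) * (b : ℝ) ^ (v.length - 1 - (i : ℕ))

/-- The fractional value `⟨w⟩_f = Σ_{i≥0} w[i]·b^(-i-1)` of an infinite digit word. -/
noncomputable def fracVal (b : ℕ) (w : ℕ → Fin b) : ℝ :=
  ∑' i : ℕ, ((w i : ℕ) : ℝ) * (b : ℝ) ^ (-(i : ℤ) - 1)

/-- The word `𝐮⋆𝐰` over `Σ^d ∪ {⋆}`; `none` is the separator `⋆`. -/
def encWord {b d : ℕ} (u : List (Fin d → Fin b)) (w : ℕ → Fin d → Fin b) :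
    ℕ → Option (Fin d → Fin b) :=
  cat (u.map some ++ [none]) (fun n => some (w n))

/-- The vector of reals encoded by `𝐮⋆𝐰`. -/
noncomputable def vecVal {b d : ℕ} (u : List (Fin d → Fin b)) (w : ℕ → Fin d → Fin b) :
    Fin d → ℝ :=
  fun i => natVal b (u.map fun t => t i) + fracVal b (fun n => w n i)

/-- A language of words over `Σ^d ∪ {⋆}` is saturated if membership only depends on
the encoded vector of reals. -/
def Saturated {b d : ℕ} (L : Set (ℕ → Option (Fin d → Fin b))) : Prop :=
  ∀ (u : List (Fin d → Fin b)) (w : ℕ → Fin d → Fin b)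
    (u' : List (Fin d → Fin b)) (w' : ℕ → Fin d → Fin b),
    vecVal u w = vecVal u' w' → encWord u w ∈ L → encWord u' w' ∈ L

/-- The parallelization `par(𝒜)` of an automaton over `Σ ∪ {⋆}`. -/
def parDBA {Q : Type} {b : ℕ} (d : ℕ) (M : DBA (Option (Fin b)) Q) :
    DBA (Option (Fin d → Fin b)) Q where
  delta := fun q x =>
    match x with
    | none => M.delta q none
    | some t => M.deltaStar q (List.ofFn fun i => some (t i))
  init := M.init
  F := M.F

/-- Fill the `f`-th component of a tuple of `Σ^□_f` with the digit `z`. -/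
def fixTuple {b d : ℕ} (f : Fin d) (z : Fin b) (t : {i : Fin d // i ≠ f} → Fin b) :
    Fin d → Fin b :=
  fun i => if h : i = f then z else t ⟨i, h⟩

/-- The automaton `𝒜^{z@f}` over `Σ^□_f ∪ {⋆}`; a letter of `Σ^□_f` is represented by
its tuple of non-`f` components (the `f`-th component being `□`). -/
def fixDBA {Q : Type} {b d : ℕ} (M : DBA (Option (Fin d → Fin b)) Q) (f : Fin d) (z : Fin b) :
    DBA (Option ({i : Fin d // i ≠ f} → Fin b)) Q where
  delta := fun q x =>
    match x with
    | none => M.delta q none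
    | some t => M.delta q (some (fixTuple f z t))
  init := M.init
  F := M.F

/-- `fix_{□@f}(𝐰)`: replace the `f`-th component of every non-`⋆` letter by `□`. -/
def eraseComp {b d : ℕ} (f : Fin d) (w : ℕ → Option (Fin d → Fin b)) :
    ℕ → Option ({i : Fin d // i ≠ f} → Fin b) :=
  fun n => (w n).map fun t i => t i.val

/-- `fix_{z@f}(𝐰)`: replace the `f`-th component (`□`) of every non-`⋆` letter by `z`. -/
def fillComp {b d : ℕ} (f : Fin d) (z : Fin b) (w : ℕ → Option ({i : Fin d // i ≠ f} → Fin b)) :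
    ℕ → Option (Fin d → Fin b) :=
  fun n => (w n).map (fixTuple f z)

/-- The automaton `𝒜^{seq z}`, over alphabet `Σ ∪ {□,⋆}` (here `none` is `⋆` and
`some none` is `□`), with states `(Q × {0,…,d−1}) ∪ {⊥}` (`none` is `⊥`). -/
def seqDBA {Q : Type} {b : ℕ} (d : ℕ) (hd : 0 < d) (M : DBA (Option (Fin b)) Q) (z : Fin b) :
    DBA (Option (Option (Fin b))) (Option (Q × Fin d)) where
  delta := fun s x =>
    match s, x with
    | none, _ => none
    | some (q, i), none => some (M.delta q none, i)
    | some (q, i), some (some a) =>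
        if h : (i : ℕ) + 1 < d then some (M.delta q (some a), ⟨(i : ℕ) + 1, h⟩) else none
    | some (q, i), some none =>
        if (i : ℕ) = d - 1 then some (M.delta q (some z), ⟨0, hd⟩) else none
  init := some (M.init, ⟨0, hd⟩)
  F := {s | ∃ q ∈ M.F, ∃ i : Fin d, s = some (q, i)}

/-- Auxiliary function for flattening an infinite word of blocks:
`flatAux blk v n` is the pair (block index, offset inside the block) of position `n`. -/
def flatAux {A B : Type} (blk : A → List B) (v : ℕ → A) : ℕ → ℕ × ℕ
  | 0 => (0, 0)
  | n + 1 =>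
      let p := flatAux blk v n
      if p.2 + 1 < (blk (v p.1)).length then (p.1, p.2 + 1) else (p.1 + 1, 0)

/-- Flattening of an infinite word of (nonempty) blocks. -/
def flatten {A B : Type} [Inhabited B] (blk : A → List B) (v : ℕ → A) : ℕ → B :=
  fun n => (blk (v (flatAux blk v n).1)).getD (flatAux blk v n).2 default

/-- The block of a letter of `Σ^d ∪ {⋆}`: a `d`-tuple becomes its list of components,
`⋆` stays a single letter. -/
def parBlock {b d : ℕ} : Option (Fin d → Fin b) → List (Option (Fin b))
  | none => [none]
  | some t => List.ofFn fun i => some (t i)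

/-- `seq(𝐯)`: the sequentialization of an infinite word over `Σ^d ∪ {⋆}`. -/
def seqWord {b d : ℕ} (v : ℕ → Option (Fin d → Fin b)) : ℕ → Option (Fin b) :=
  flatten parBlock v

/-- The block of a letter of `Σ^□_f ∪ {⋆}`, as a word over `Σ ∪ {□,⋆}`. -/
def sqBlock {b d : ℕ} (f : Fin d) :
    Option ({i : Fin d // i ≠ f} → Fin b) → List (Option (Option (Fin b)))
  | none => [none]
  | some t => List.ofFn fun i : Fin d =>
      if h : i = f then some none else some (some (t ⟨i, h⟩))

/-- Number of non-`⋆` letters among the first `n` letters of `w`. -/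
def digitCount {b : ℕ} (w : ℕ → Option (Fin b)) : ℕ → ℕ
  | 0 => 0
  | n + 1 => digitCount w n + (if w n = none then 0 else 1)

/-!
Started with counter `d - 1 - f`, the automaton `𝒜^{seq z}` reads the block of a letter of
`Σ^□_f` by feeding `𝒜` the `d` digits that `par(𝒜)^{z@f}` reads at once (the `□` standing for
`z`), and its counter returns to `d - 1 - f`; reading `a_{f+1} ⋯ a_{d−1}` first brings it into
this configuration. So at the block boundaries the run of `𝒜^{seq z}` is the run of
`par(𝒜)^{z@f}` paired with that counter value, which transfers acceptance in one direction.
Conversely, between two visits of an accepting state `(s, i)` of `𝒜^{seq z}` the first component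
moves along transitions of `𝒜`, so every boundary state in between lies in the strongly connected
component of `s`, and is accepting because `𝒜` is weak; as there are finitely many states, one
of them is then visited infinitely often.
-/

namespace DBA

variable {A Q : Type} (M : DBA A Q)

theorem deltaStar_append (q : Q) (u v : List A) :
    M.deltaStar q (u ++ v) = M.deltaStar (M.deltaStar q u) v := by
  induction u generalizing q with
  | nil => rfl
  | cons x u ih => exact ih (M.delta q x)

theorem deltaStar_start (s : Q) : (M.start s).deltaStar = M.deltaStar := by
  funext q u
  induction u generalizing q with
  | nil => rfl
  | cons x u ih => exact ih _

theorem reach_start (s : Q) : (M.start s).Reach = M.Reach := by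
  funext q q'
  unfold Reach
  rw [deltaStar_start]

theorem run_add_length {w : ℕ → A} {p : ℕ} {u : List A}
    (hw : ∀ j (hj : j < u.length), w (p + j) = u[j]) :
    M.run w (p + u.length) = M.deltaStar (M.run w p) u := by
  induction u generalizing p with
  | nil => rfl
  | cons x u ih =>
    have hx : w p = x := hw 0 (by simp)
    have hu := ih (p := p + 1) fun j hj => by
      rw [Nat.add_assoc, Nat.add_comm 1 j, hw (j + 1) (by simpa using hj), List.getElem_cons_succ]
    rw [List.length_cons, ← Nat.add_assoc, Nat.add_right_comm, hu]
    simp only [run, hx, deltaStar]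

theorem reach_run (w : ℕ → A) {i j : ℕ} (hij : i < j) : M.Reach (M.run w i) (M.run w j) := by
  refine ⟨List.ofFn fun k : Fin (j - i) => w (i + k), by simp; omega, ?_⟩
  have h := M.run_add_length (w := w) (p := i) (u := List.ofFn fun k : Fin (j - i) => w (i + k))
    (by simp)
  rw [← h, List.length_ofFn, Nat.add_sub_cancel' hij.le]

theorem accepts_iff_frequently [Finite Q] (w : ℕ → A) :
    M.Accepts w ↔ ∃ᶠ n in Filter.atTop, M.run w n ∈ M.F := by
  simp only [Accepts, ← Filter.frequently_atTop, ← (Set.toFinite M.F).frequently_exists,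
    exists_eq_right']

end DBA

theorem cat_length_add {A : Type} (u : List A) (w : ℕ → A) (n : ℕ) :
    cat u w (u.length + n) = w n := by
  simp [cat]

theorem cat_of_lt {A : Type} (u : List A) (w : ℕ → A) {j : ℕ} (hj : j < u.length) :
    cat u w j = u[j] := by
  simp [cat, hj]

def blockStart {A B : Type} (blk : A → List B) (v : ℕ → A) : ℕ → ℕ
  | 0 => 0
  | n + 1 => blockStart blk v n + (blk (v n)).length

section Flatten

variable {A B : Type} {blk : A → List B} (hblk : ∀ x, 0 < (blk x).length) (v : ℕ → A)
include hblk

theorem blockStart_strictMono : StrictMono (blockStart blk v) :=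
  strictMono_nat_of_lt_succ fun n => Nat.lt_add_of_pos_right (hblk (v n))

theorem flatAux_blockStart_add (n : ℕ) :
    ∀ j < (blk (v n)).length, flatAux blk v (blockStart blk v n + j) = (n, j) := by
  have inside (n : ℕ) (h0 : flatAux blk v (blockStart blk v n) = (n, 0)) :
      ∀ j < (blk (v n)).length, flatAux blk v (blockStart blk v n + j) = (n, j) := by
    intro j hj
    induction j with
    | zero => exact h0
    | succ j ih => simp [flatAux, ih (by omega), hj]
  refine inside n ?_
  induction n with
  | zero => rfl
  | succ n ih =>
    have hlen := hblk (v n)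
    have hlast := inside n ih _ (Nat.sub_one_lt_of_lt hlen)
    rw [blockStart, Nat.add_zero, ← Nat.sub_add_cancel hlen, ← Nat.add_assoc]
    simp [flatAux, hlast, Nat.sub_add_cancel hlen]

theorem flatten_blockStart_add [Inhabited B] (n : ℕ) :
    ∀ j (hj : j < (blk (v n)).length), flatten blk v (blockStart blk v n + j) = (blk (v n))[j] :=
  fun j hj => by simp [flatten, flatAux_blockStart_add hblk v n j hj, hj]

end Flatten

theorem DBA.run_cat_flatten_blockStart {A B Q S : Type} [Inhabited B] (L : DBA A Q)
    (N : DBA B S) {blk : A → List B} (hblk : ∀ x, 0 < (blk x).length) (φ : Q → S)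
    (hφ : ∀ q x, N.deltaStar (φ q) (blk x) = φ (L.delta q x)) (u : List B)
    (hu : N.deltaStar N.init u = φ L.init) (v : ℕ → A) (n : ℕ) :
    N.run (cat u (flatten blk v)) (u.length + blockStart blk v n) = φ (L.run v n) := by
  induction n with
  | zero =>
    rw [blockStart, Nat.add_zero, ← Nat.zero_add u.length,
      N.run_add_length fun j hj => by rw [Nat.zero_add, cat_of_lt]]
    exact hu
  | succ n ih =>
    rw [blockStart, ← Nat.add_assoc, N.run_add_length fun j hj => by
      rw [Nat.add_assoc, cat_length_add, flatten_blockStart_add hblk]]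
    rw [ih, hφ]
    rfl

/-- The letter of `Σ ∪ {⋆}` that `𝒜^{seq z}` passes on to `𝒜` when it reads a letter of
`Σ ∪ {□,⋆}`. -/
def unseq {b : ℕ} (z : Fin b) : Option (Option (Fin b)) → Option (Fin b)
  | none => none
  | some none => some z
  | some (some a) => some a

/-- The second component of the states of `𝒜^{seq z}`, with `none` for `⊥`. -/
def seqCounter {b : ℕ} (d : ℕ) : Option (Fin d) → Option (Option (Fin b)) → Option (Fin d)
  | none, _ => none
  | some i, none => some i
  | some i, some none => if (i : ℕ) = d - 1 then some ⟨0, i.pos⟩ else none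
  | some i, some (some _) => if h : (i : ℕ) + 1 < d then some ⟨i + 1, h⟩ else none

section SeqDBA

variable {Q : Type} {b d : ℕ}

theorem foldl_seqCounter_none (u : List (Option (Option (Fin b)))) :
    u.foldl (seqCounter d) none = none := by
  induction u with
  | nil => rfl
  | cons x u ih => exact ih

theorem foldl_seqCounter_digits {u : List (Option (Option (Fin b)))}
    (hu : ∀ x ∈ u, ∃ a, x = some (some a)) (i : Fin d) (h : i + u.length < d) :
    u.foldl (seqCounter d) (some i) = some ⟨i + u.length, h⟩ := by
  induction u generalizing i with
  | nil => rfl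
  | cons x u ih =>
    obtain ⟨a, rfl⟩ := hu x List.mem_cons_self
    have hi : (i : ℕ) + 1 < d := by simp at h; omega
    simp only [List.foldl_cons, seqCounter, hi, dite_true]
    rw [ih (fun y hy => hu y (List.mem_cons_of_mem _ hy)) ⟨i + 1, hi⟩ (by simp at h ⊢; omega)]
    simp [Nat.add_assoc, Nat.add_comm 1]

variable (M : DBA (Option (Fin b)) Q) (hd : 0 < d) (z : Fin b)

theorem seqDBA_delta (q : Q) (i : Fin d) (x : Option (Option (Fin b))) :
    (seqDBA d hd M z).delta (some (q, i)) x =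
      (seqCounter d (some i) x).map fun j => (M.delta q (unseq z x), j) := by
  rcases x with _ | _ | a
  · rfl
  all_goals simp only [seqDBA, seqCounter, unseq]; split_ifs <;> rfl

theorem seqDBA_deltaStar (q : Q) (i : Fin d) (u : List (Option (Option (Fin b)))) :
    (seqDBA d hd M z).deltaStar (some (q, i)) u =
      (u.foldl (seqCounter d) (some i)).map fun j => (M.deltaStar q (u.map (unseq z)), j) := by
  have sink (u : List (Option (Option (Fin b)))) : (seqDBA d hd M z).deltaStar none u = none := by
    induction u with
    | nil => rfl
    | cons x u ih => exact ih
  induction u generalizing q i with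
  | nil => rfl
  | cons x u ih =>
    rw [DBA.deltaStar, seqDBA_delta]
    rcases h : seqCounter d (some i) x with _ | j
    · simp [sink, h, foldl_seqCounter_none]
    · simp [ih, h, DBA.deltaStar]

theorem seqDBA_reach_fst {s s' : Q × Fin d} (h : (seqDBA d hd M z).Reach (some s) (some s')) :
    M.Reach s.1 s'.1 := by
  obtain ⟨u, hu, hrun⟩ := h
  rw [seqDBA_deltaStar, Option.map_eq_some_iff] at hrun
  obtain ⟨j, -, rfl⟩ := hrun
  exact ⟨u.map (unseq z), by simpa using hu, rfl⟩

end SeqDBA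

section SqBlock

variable {Q : Type} {b d : ℕ} (f : Fin d)

theorem sqBlock_length_pos (x : Option ({i : Fin d // i ≠ f} → Fin b)) :
    0 < (sqBlock f x).length := by
  cases x <;> simp [sqBlock, f.pos]

theorem map_unseq_sqBlock (z : Fin b) (t : {i : Fin d // i ≠ f} → Fin b) :
    (sqBlock f (some t)).map (unseq z) = List.ofFn fun i => some (fixTuple f z t i) := by
  simp only [sqBlock, List.map_ofFn]
  congr 1
  funext i
  by_cases hi : i = f <;> simp [fixTuple, unseq, hi]

/-- Reading a block, the counter passes `d - 1` just at the `□` in position `f`, so that it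
returns to the number `f.rev` of components after `f`. -/
theorem foldl_seqCounter_sqBlock (x : Option ({i : Fin d // i ≠ f} → Fin b)) :
    (sqBlock f x).foldl (seqCounter d) (some f.rev) = some f.rev := by
  rcases x with _ | t
  · rfl
  set L := sqBlock f (some t)
  have hlen : L.length = d := by simp [L, sqBlock]
  have digit (j : ℕ) (hj : j < L.length) (hjf : j ≠ f) : ∃ a, L[j] = some (some a) := by
    have hne : (⟨j, hlen ▸ hj⟩ : Fin d) ≠ f := fun h => hjf (congrArg Fin.val h)
    simp [L, sqBlock, hne]
  have hbox : L[(f : ℕ)]'(by omega) = some none := by simp [L, sqBlock]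
  rw [← List.take_append_drop f L, List.drop_eq_getElem_cons (by omega), List.foldl_append,
    foldl_seqCounter_digits (i := f.rev), List.foldl_cons, hbox]
  · simp only [List.length_take, Fin.val_rev, seqCounter]
    rw [if_pos (by omega), foldl_seqCounter_digits (i := ⟨0, f.pos⟩)]
    · simp only [List.length_drop, zero_add, Option.some.injEq, Fin.ext_iff, Fin.val_rev]
      omega
    · intro x hx
      obtain ⟨j, hj, rfl⟩ := List.mem_iff_getElem.1 hx
      rw [List.getElem_drop]
      exact digit _ _ (by omega)
    · simp; omega
  · intro x hx
    obtain ⟨j, hj, rfl⟩ := List.mem_iff_getElem.1 hx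
    rw [List.getElem_take]
    exact digit _ _ (by simp at hj; omega)
  · simp; omega

theorem seqDBA_deltaStar_sqBlock (M : DBA (Option (Fin b)) Q) (hd : 0 < d) (z : Fin b) (q : Q)
    (x : Option ({i : Fin d // i ≠ f} → Fin b)) :
    (seqDBA d hd M z).deltaStar (some (q, f.rev)) (sqBlock f x) =
      some ((fixDBA (parDBA d M) f z).delta q x, f.rev) := by
  rw [seqDBA_deltaStar, foldl_seqCounter_sqBlock]
  rcases x with _ | t
  · rfl
  · simp only [map_unseq_sqBlock]
    rfl

end SqBlock

theorem seqDBA_deltaStar_tail {Q : Type} {b d : ℕ} (M : DBA (Option (Fin b)) Q) (hd : 0 < d)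
    (z : Fin b) (f : Fin d) (q : Q) (a : Fin d → Fin b) :
    (seqDBA d hd M z).deltaStar
        (some (M.deltaStar q (List.ofFn fun i : Fin ((f : ℕ) + 1) =>
          some (a ⟨(i : ℕ), Nat.lt_of_lt_of_le i.isLt f.isLt⟩)), ⟨0, hd⟩))
        (List.ofFn fun j : Fin (d - 1 - (f : ℕ)) =>
          some (some (a ⟨(f : ℕ) + 1 + (j : ℕ), by have := j.isLt; omega⟩))) =
      some (M.deltaStar q (List.ofFn fun i : Fin d => some (a i)), f.rev) := by
  have hsplit : (List.ofFn fun i : Fin d => some (a i)) =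
      (List.ofFn fun i : Fin ((f : ℕ) + 1) =>
        some (a ⟨(i : ℕ), Nat.lt_of_lt_of_le i.isLt f.isLt⟩)) ++
      List.ofFn fun j : Fin (d - 1 - (f : ℕ)) =>
        some (a ⟨(f : ℕ) + 1 + (j : ℕ), by have := j.isLt; omega⟩) := by
    refine List.ext_getElem (by simp; omega) fun j h₁ h₂ => ?_
    simp only [List.getElem_ofFn, List.getElem_append, List.length_ofFn]
    split_ifs with hj
    · rfl
    · simp only [Option.some.injEq]
      congr
      omega
  rw [seqDBA_deltaStar, foldl_seqCounter_digits (by simp) ⟨0, hd⟩ (by simp; omega), hsplit,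
    DBA.deltaStar_append]
  simp only [List.map_ofFn, Function.comp_def, unseq, List.length_ofFn, zero_add, Option.map_some,
    Option.some.injEq, Prod.mk.injEq, true_and, Fin.ext_iff, Fin.val_rev]
  omega

/-- relation between `par(𝒜)^{z@f}` and `𝒜^{seq z}`. -/
theorem stmt13 {Q : Type} [Fintype Q] {b : ℕ}
    (M : DBA (Option (Fin b)) Q) (hweak : M.Weak)
    (d : ℕ) (hd : 0 < d) (f : Fin d) (z : Fin b) (q : Q) (a : Fin d → Fin b)
    (w : ℕ → Option ({i : Fin d // i ≠ f} → Fin b)) :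
    ((fixDBA (parDBA d M) f z).start
        (M.deltaStar q (List.ofFn fun i : Fin d => some (a i)))).Accepts w ↔
      ((seqDBA d hd M z).start
          (some (M.deltaStar q (List.ofFn fun i : Fin ((f : ℕ) + 1) =>
              some (a ⟨(i : ℕ), by have := i.isLt; have := f.isLt; omega⟩)), ⟨0, hd⟩))).Accepts
        (cat
          (List.ofFn fun j : Fin (d - 1 - (f : ℕ)) =>
            some (some (a ⟨(f : ℕ) + 1 + (j : ℕ), by have := j.isLt; have := f.isLt; omega⟩)))
          (flatten (sqBlock f) w)) := by
  set L := (fixDBA (parDBA d M) f z).start (M.deltaStar q (List.ofFn fun i : Fin d => some (a i)))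
  set N := (seqDBA d hd M z).start _
  set u := List.ofFn fun j : Fin (d - 1 - (f : ℕ)) => _
  set W := cat u (flatten (sqBlock f) w)
  set pos := fun n => u.length + blockStart (sqBlock f) w n
  have hsim (n : ℕ) : N.run W (pos n) = some (L.run w n, f.rev) :=
    L.run_cat_flatten_blockStart N (sqBlock_length_pos f) (fun q => some (q, f.rev))
      (fun q x => by rw [DBA.deltaStar_start]; exact seqDBA_deltaStar_sqBlock f M hd z q x) u
      (by rw [DBA.deltaStar_start]; exact seqDBA_deltaStar_tail M hd z f q a) w n
  have hpos : Filter.Tendsto pos Filter.atTop Filter.atTop :=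
    ((blockStart_strictMono (sqBlock_length_pos f) w).const_add u.length).tendsto_atTop
  constructor
  · rintro ⟨s, hs, hfreq⟩
    refine ⟨some (s, f.rev), ⟨s, hs, f.rev, rfl⟩, Filter.frequently_atTop.1 ?_⟩
    exact hpos.frequently ((Filter.frequently_atTop.2 hfreq).mono fun n hn => hn ▸ hsim n)
  · rintro ⟨_, ⟨s, hs, i, rfl⟩, hfreq⟩
    rw [L.accepts_iff_frequently]
    obtain ⟨p₁, -, hp₁⟩ := hfreq 0
    refine Filter.Eventually.frequently ?_
    filter_upwards [hpos.eventually_gt_atTop p₁] with n hn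
    obtain ⟨p₂, hp₂, hp₂'⟩ := hfreq (pos n + 1)
    have h₁ := N.reach_run W hn
    have h₂ := N.reach_run W (Nat.lt_of_succ_le hp₂)
    rw [hp₁, hsim, DBA.reach_start] at h₁
    rw [hp₂', hsim, DBA.reach_start] at h₂
    exact hweak s hs _ (seqDBA_reach_fst M hd z h₁) (seqDBA_reach_fst M hd z h₂)
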